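/- For the implicit Euler iteration a^{(ℓ+1)} = (M + Δt K)^{-1}(M a^{(ℓ)} + Δt j^{(ℓ+1)}) with M, K symmetric positive semidefinite and M + Δt K positive definite, if a* is a fixed point for constant source j, then the error e^{(ℓ)} = a^{(ℓ)} − a* satisfies |e^{(ℓ+1)}|_M ≤ |e^{(ℓ)}|_M, and if additionally K is positive definite on ker-complement of M, e^{(ℓ)} converges to 0 in the M-seminorm. -/

import Mathlib

open Matrix Filter
open scoped MatrixOrder

namespace ImplicitEulerAux

variable {n : ℕ}

lemma symm_dot (A : Matrix (Fin n) (Fin n) ℝ) (hA : Aᵀ = A) (x y : Fin n → ℝ) :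
    x ⬝ᵥ A *ᵥ y = (A *ᵥ x) ⬝ᵥ y := by
  rw [dotProduct_mulVec, ← mulVec_transpose, hA]

lemma isHermitian_of_symm {A : Matrix (Fin n) (Fin n) ℝ} (hA : Aᵀ = A) : A.IsHermitian := by
  rwa [Matrix.IsHermitian, conjTranspose_eq_transpose_of_trivial]

lemma sym_of_isHermitian {A : Matrix (Fin n) (Fin n) ℝ} (hA : A.IsHermitian) : Aᵀ = A := by
  rwa [Matrix.IsHermitian, conjTranspose_eq_transpose_of_trivial] at hA

lemma sq_le {A : Matrix (Fin n) (Fin n) ℝ} (hA : A.PosSemidef)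
    (hle : ∀ x : Fin n → ℝ, x ⬝ᵥ A *ᵥ x ≤ x ⬝ᵥ x) (x : Fin n → ℝ) :
    x ⬝ᵥ A *ᵥ (A *ᵥ x) ≤ x ⬝ᵥ A *ᵥ x := by
  have hQQ : CFC.sqrt A * CFC.sqrt A = A := CFC.sqrt_mul_sqrt_self A hA.nonneg
  set Q := CFC.sqrt A with hQdef
  have hQsym : Qᵀ = Q := sym_of_isHermitian (CFC.sqrt_nonneg A).posSemidef.isHermitian
  have h1 : A *ᵥ (A *ᵥ x) = Q *ᵥ (A *ᵥ (Q *ᵥ x)) := by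
    rw [mulVec_mulVec, mulVec_mulVec, mulVec_mulVec, ← hQQ]
    simp only [Matrix.mul_assoc]
  calc x ⬝ᵥ A *ᵥ (A *ᵥ x) = x ⬝ᵥ Q *ᵥ (A *ᵥ (Q *ᵥ x)) := by rw [h1]
    _ = (Q *ᵥ x) ⬝ᵥ A *ᵥ (Q *ᵥ x) := symm_dot Q hQsym _ _
    _ ≤ (Q *ᵥ x) ⬝ᵥ (Q *ᵥ x) := hle _
    _ = x ⬝ᵥ A *ᵥ x := by rw [← symm_dot Q hQsym, mulVec_mulVec, hQQ]

lemma cube_le {A : Matrix (Fin n) (Fin n) ℝ} (hA : A.PosSemidef) (hAsym : Aᵀ = A)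
    (hle : ∀ x : Fin n → ℝ, x ⬝ᵥ A *ᵥ x ≤ x ⬝ᵥ x) (x : Fin n → ℝ) :
    x ⬝ᵥ A *ᵥ (A *ᵥ (A *ᵥ x)) ≤ x ⬝ᵥ A *ᵥ x := by
  calc x ⬝ᵥ A *ᵥ (A *ᵥ (A *ᵥ x)) = (A *ᵥ x) ⬝ᵥ A *ᵥ (A *ᵥ x) := symm_dot A hAsym _ _
    _ ≤ (A *ᵥ x) ⬝ᵥ (A *ᵥ x) := hle _
    _ = x ⬝ᵥ A *ᵥ (A *ᵥ x) := (symm_dot A hAsym _ _).symm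
    _ ≤ x ⬝ᵥ A *ᵥ x := sq_le hA hle x

lemma norm_pow_le {A : Matrix (Fin n) (Fin n) ℝ} (hA : A.PosSemidef) (hAsym : Aᵀ = A)
    (hle : ∀ x : Fin n → ℝ, x ⬝ᵥ A *ᵥ x ≤ x ⬝ᵥ x) (k : ℕ) (x : Fin n → ℝ) :
    (A ^ k *ᵥ x) ⬝ᵥ (A ^ k *ᵥ x) ≤ x ⬝ᵥ x := by
  induction k generalizing x with
  | zero => simp
  | succ k ih =>
    have h1 : A ^ (k+1) *ᵥ x = A ^ k *ᵥ (A *ᵥ x) := by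
      rw [mulVec_mulVec, ← pow_succ]
    rw [h1]
    calc (A ^ k *ᵥ (A *ᵥ x)) ⬝ᵥ (A ^ k *ᵥ (A *ᵥ x)) ≤ (A *ᵥ x) ⬝ᵥ (A *ᵥ x) := ih _
      _ = x ⬝ᵥ A *ᵥ (A *ᵥ x) := (symm_dot A hAsym _ _).symm
      _ ≤ x ⬝ᵥ A *ᵥ x := sq_le hA hle x
      _ ≤ x ⬝ᵥ x := hle x

lemma pow_dot_le {A : Matrix (Fin n) (Fin n) ℝ} (hA : A.PosSemidef) (hAsym : Aᵀ = A)
    (hle : ∀ x : Fin n → ℝ, x ⬝ᵥ A *ᵥ x ≤ x ⬝ᵥ x) (m : ℕ) (x : Fin n → ℝ) :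
    x ⬝ᵥ A ^ m *ᵥ x ≤ x ⬝ᵥ x := by
  have hpksym : ∀ k : ℕ, (A ^ k)ᵀ = A ^ k := fun k => by rw [transpose_pow, hAsym]
  rcases Nat.even_or_odd m with ⟨k, hk⟩ | ⟨k, hk⟩
  · subst hk
    have h1 : A ^ (k + k) *ᵥ x = A ^ k *ᵥ (A ^ k *ᵥ x) := by
      rw [mulVec_mulVec, ← pow_add]
    rw [h1, symm_dot _ (hpksym k)]
    exact norm_pow_le hA hAsym hle k x
  · subst hk
    have h1 : A ^ (2 * k + 1) *ᵥ x = A ^ k *ᵥ (A *ᵥ (A ^ k *ᵥ x)) := by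
      rw [mulVec_mulVec, mulVec_mulVec]
      have he : 2 * k + 1 = k + 1 + k := by omega
      rw [he, pow_add, pow_succ]
    rw [h1, symm_dot _ (hpksym k)]
    calc (A ^ k *ᵥ x) ⬝ᵥ A *ᵥ (A ^ k *ᵥ x) ≤ (A ^ k *ᵥ x) ⬝ᵥ (A ^ k *ᵥ x) := hle _
      _ ≤ x ⬝ᵥ x := norm_pow_le hA hAsym hle k x

lemma contract {B : Matrix (Fin n) (Fin n) ℝ} (hB : B.PosSemidef) (hBsym : Bᵀ = B)
    (hle : ∀ x : Fin n → ℝ, x ⬝ᵥ B *ᵥ x ≤ x ⬝ᵥ x) (y : Fin n → ℝ) :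
    (y - B *ᵥ y) ⬝ᵥ (y - B *ᵥ y) ≤ y ⬝ᵥ y - (B *ᵥ y) ⬝ᵥ (B *ᵥ y) := by
  have h1 : (B *ᵥ y) ⬝ᵥ (B *ᵥ y) = y ⬝ᵥ B *ᵥ (B *ᵥ y) := (symm_dot B hBsym _ _).symm
  have h2 : y ⬝ᵥ B *ᵥ (B *ᵥ y) ≤ y ⬝ᵥ B *ᵥ y := sq_le hB hle y
  have h3 : (B *ᵥ y) ⬝ᵥ y = y ⬝ᵥ B *ᵥ y := dotProduct_comm _ _
  have h4 : y ⬝ᵥ (B *ᵥ y) = y ⬝ᵥ B *ᵥ y := rfl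
  simp only [sub_dotProduct, dotProduct_sub]
  linarith

end ImplicitEulerAux

open ImplicitEulerAux

/-- For the implicit Euler iteration `a⁽ˡ⁺¹⁾ = (M + Δt K)⁻¹ (M a⁽ˡ⁾ + Δt j)` with constant
source and fixed point `a*` (i.e. `K a* = j`), the error `e⁽ˡ⁾ = a⁽ˡ⁾ − a*` is
non-increasing in the `M`-seminorm; if additionally `K` is positive definite on the
complement of `ker M`, the error tends to `0` in the `M`-seminorm. -/
theorem implicit_euler_error_decay {n : ℕ}
    (M K : Matrix (Fin n) (Fin n) ℝ) (Δt : ℝ) (ht : 0 < Δt)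
    (hM : M.PosSemidef) (hK : K.PosSemidef)
    (hW : (M + Δt • K).PosDef)
    (j astar : Fin n → ℝ) (hstar : K.mulVec astar = j)
    (a : ℕ → Fin n → ℝ)
    (hiter : ∀ ℓ, a (ℓ + 1) = (M + Δt • K)⁻¹.mulVec (M.mulVec (a ℓ) + Δt • j))
    (e : ℕ → Fin n → ℝ) (he : ∀ ℓ, e ℓ = a ℓ - astar) :
    (∀ ℓ, (e (ℓ + 1)) ⬝ᵥ M.mulVec (e (ℓ + 1)) ≤ (e ℓ) ⬝ᵥ M.mulVec (e ℓ)) ∧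
      ((∀ x : Fin n → ℝ, M.mulVec x ≠ 0 → 0 < x ⬝ᵥ K.mulVec x) →
        Tendsto (fun ℓ => (e ℓ) ⬝ᵥ M.mulVec (e ℓ)) atTop (nhds 0)) := by
  set W := M + Δt • K with hWdef
  have hMsym : Mᵀ = M := sym_of_isHermitian hM.isHermitian
  have hMdot : ∀ v : Fin n → ℝ, 0 ≤ v ⬝ᵥ M *ᵥ v := fun v => by simpa using hM.dotProduct_mulVec_nonneg v
  have hKdot : ∀ v : Fin n → ℝ, 0 ≤ v ⬝ᵥ K *ᵥ v := fun v => by simpa using hK.dotProduct_mulVec_nonneg v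
  have hWdetUnit : IsUnit W.det := (Matrix.isUnit_iff_isUnit_det W).mp hW.isUnit
  have hWWinv : W * W⁻¹ = 1 := Matrix.mul_nonsing_inv W hWdetUnit
  have hWmv : ∀ v : Fin n → ℝ, W *ᵥ v = M *ᵥ v + Δt • (K *ᵥ v) := by
    intro v; rw [hWdef, add_mulVec, smul_mulVec]
  have hWe : ∀ ℓ, W *ᵥ e (ℓ + 1) = M *ᵥ e ℓ := by
    intro ℓ
    have hWa : W *ᵥ a (ℓ + 1) = M *ᵥ a ℓ + Δt • j := by
      rw [hiter ℓ, mulVec_mulVec, hWWinv, one_mulVec]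
    have hWstar : W *ᵥ astar = M *ᵥ astar + Δt • j := by
      rw [hWmv, hstar]
    rw [he (ℓ + 1), he ℓ, mulVec_sub, mulVec_sub, hWa, hWstar]
    abel
  -- square root of W
  have hRR : CFC.sqrt W * CFC.sqrt W = W := CFC.sqrt_mul_sqrt_self W hW.posSemidef.nonneg
  set R := CFC.sqrt W with hRdef
  have hRsym : Rᵀ = R := sym_of_isHermitian (CFC.sqrt_nonneg W).posSemidef.isHermitian
  have hRdet : IsUnit R.det := by
    have hdet : R.det * R.det = W.det := by rw [← Matrix.det_mul, hRR]
    have hWdet : 0 < W.det := hW.det_pos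
    refine isUnit_iff_ne_zero.mpr fun h => ?_
    rw [h, mul_zero] at hdet
    exact absurd hdet.symm (ne_of_gt hWdet)
  have hRRinv : R * R⁻¹ = 1 := Matrix.mul_nonsing_inv R hRdet
  have hRinvR : R⁻¹ * R = 1 := Matrix.nonsing_inv_mul R hRdet
  have hRisym : (R⁻¹)ᵀ = R⁻¹ := by rw [Matrix.transpose_nonsing_inv, hRsym]
  set S := R⁻¹ * M * R⁻¹ with hSdef
  set y : ℕ → Fin n → ℝ := fun ℓ => R *ᵥ e ℓ with hydef
  have hSsym : Sᵀ = S := by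
    rw [hSdef]
    simp only [Matrix.transpose_mul, hRisym, hMsym, Matrix.mul_assoc]
  have hSmv : ∀ v : Fin n → ℝ, S *ᵥ v = R⁻¹ *ᵥ (M *ᵥ (R⁻¹ *ᵥ v)) := by
    intro v
    simp only [hSdef, ← mulVec_mulVec]
  have hRinv_y : ∀ ℓ, R⁻¹ *ᵥ y ℓ = e ℓ := by
    intro ℓ
    simp only [hydef, mulVec_mulVec, hRinvR, one_mulVec]
  have hSdot : ∀ v : Fin n → ℝ, v ⬝ᵥ S *ᵥ v = (R⁻¹ *ᵥ v) ⬝ᵥ M *ᵥ (R⁻¹ *ᵥ v) := by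
    intro v
    rw [hSmv, symm_dot _ hRisym]
  have hyS : ∀ ℓ, S *ᵥ y ℓ = y (ℓ + 1) := by
    intro ℓ
    rw [hSmv, hRinv_y, ← hWe ℓ]
    show R⁻¹ *ᵥ (W *ᵥ e (ℓ + 1)) = R *ᵥ e (ℓ + 1)
    rw [← hRR, mulVec_mulVec, ← Matrix.mul_assoc, hRinvR, Matrix.one_mul]
  have hp_eq : ∀ ℓ, e ℓ ⬝ᵥ M *ᵥ e ℓ = y ℓ ⬝ᵥ S *ᵥ y ℓ := by
    intro ℓ
    rw [hSdot, hRinv_y]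
  have hS_psd : S.PosSemidef := by
    refine .of_dotProduct_mulVec_nonneg (isHermitian_of_symm hSsym) fun v => ?_
    simpa [hSdot v] using hMdot (R⁻¹ *ᵥ v)
  have hSle : ∀ v : Fin n → ℝ, v ⬝ᵥ S *ᵥ v ≤ v ⬝ᵥ v := by
    intro v
    have hu : R *ᵥ (R⁻¹ *ᵥ v) = v := by rw [mulVec_mulVec, hRRinv, one_mulVec]
    set u := R⁻¹ *ᵥ v with hudef
    have h1 : v ⬝ᵥ v = u ⬝ᵥ W *ᵥ u := by
      conv_lhs => rw [← hu]
      rw [← symm_dot R hRsym, mulVec_mulVec, hRR]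
    have h2 : u ⬝ᵥ W *ᵥ u = u ⬝ᵥ M *ᵥ u + Δt * (u ⬝ᵥ K *ᵥ u) := by
      rw [hWmv, dotProduct_add, dotProduct_smul, smul_eq_mul]
    have h3 := hKdot u
    have h4 : v ⬝ᵥ S *ᵥ v = u ⬝ᵥ M *ᵥ u := hSdot v
    nlinarith [mul_nonneg ht.le h3]
  have part1 : ∀ ℓ, (e (ℓ + 1)) ⬝ᵥ M *ᵥ (e (ℓ + 1)) ≤ (e ℓ) ⬝ᵥ M *ᵥ (e ℓ) := by
    intro ℓ
    rw [hp_eq ℓ, hp_eq (ℓ + 1), ← hyS ℓ, ← symm_dot S hSsym]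
    exact cube_le hS_psd hSsym hSle (y ℓ)
  refine ⟨part1, fun hker => ?_⟩
  -- Part 2
  set b : ℕ → ℝ := fun ℓ => y ℓ ⬝ᵥ y ℓ with hbdef
  have hb0 : ∀ ℓ, 0 ≤ b ℓ := by
    intro ℓ
    exact Finset.sum_nonneg fun i _ => mul_self_nonneg _
  have hbmono : ∀ ℓ, b (ℓ + 1) ≤ b ℓ := by
    intro ℓ
    have h1 : b (ℓ + 1) = (S *ᵥ y ℓ) ⬝ᵥ (S *ᵥ y ℓ) := by rw [hyS ℓ]
    have h2 : (S *ᵥ y ℓ) ⬝ᵥ (S *ᵥ y ℓ) = y ℓ ⬝ᵥ S *ᵥ (S *ᵥ y ℓ) := (symm_dot S hSsym _ _).symm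
    calc b (ℓ + 1) = y ℓ ⬝ᵥ S *ᵥ (S *ᵥ y ℓ) := by rw [h1, h2]
      _ ≤ y ℓ ⬝ᵥ S *ᵥ y ℓ := sq_le hS_psd hSle (y ℓ)
      _ ≤ b ℓ := hSle (y ℓ)
  have hpow : ∀ ℓ m, y (ℓ + m) = S ^ m *ᵥ y ℓ := by
    intro ℓ m
    induction m with
    | zero => simp
    | succ m ih =>
      have : ℓ + (m + 1) = (ℓ + m) + 1 := rfl
      rw [this, ← hyS (ℓ + m), ih, mulVec_mulVec, ← pow_succ']
  have key : ∀ ℓ m, (y ℓ - y (ℓ + m)) ⬝ᵥ (y ℓ - y (ℓ + m)) ≤ b ℓ - b (ℓ + m) := by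
    intro ℓ m
    have hPsym : (S ^ m)ᵀ = S ^ m := by rw [Matrix.transpose_pow, hSsym]
    have hPle : ∀ x : Fin n → ℝ, x ⬝ᵥ S ^ m *ᵥ x ≤ x ⬝ᵥ x := pow_dot_le hS_psd hSsym hSle m
    have hc := contract (hS_psd.pow m) hPsym hPle (y ℓ)
    have hb2 : b (ℓ + m) = (S ^ m *ᵥ y ℓ) ⬝ᵥ (S ^ m *ᵥ y ℓ) := by
      show y (ℓ + m) ⬝ᵥ y (ℓ + m) = _
      rw [hpow ℓ m]
    rw [hpow ℓ m, hb2]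
    exact hc
  have hbanti : Antitone b := antitone_nat_of_succ_le hbmono
  have hbdd : BddBelow (Set.range b) := ⟨0, fun x ⟨ℓ, hx⟩ => hx ▸ hb0 ℓ⟩
  have hbL : Tendsto b atTop (nhds (⨅ ℓ, b ℓ)) := tendsto_atTop_ciInf hbanti hbdd
  set L := ⨅ ℓ, b ℓ with hLdef
  have hLle : ∀ k, L ≤ b k := fun k => ciInf_le hbdd k
  have hyC : CauchySeq y := by
    rw [Metric.cauchySeq_iff']
    intro ε hε
    have hε2 : L < L + ε ^ 2 := by have := pow_pos hε 2; linarith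
    obtain ⟨N, hN⟩ := ((tendsto_order.mp hbL).2 (L + ε ^ 2) hε2).exists_forall_of_atTop
    refine ⟨N, fun k hk => ?_⟩
    obtain ⟨m, rfl⟩ := Nat.exists_eq_add_of_le hk
    have h1 := key N m
    have h2 : b N - b (N + m) < ε ^ 2 := by
      have := hLle (N + m)
      have := hN N le_rfl
      linarith
    rw [dist_pi_lt_iff hε]
    intro i
    set d : Fin n → ℝ := y N - y (N + m) with hddef
    have hcoord : d i * d i ≤ d ⬝ᵥ d :=
      Finset.single_le_sum (fun j _ => mul_self_nonneg (d j)) (Finset.mem_univ i)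
    have hdi : d i * d i < ε ^ 2 := by linarith
    have habs : |d i| < ε := by
      by_contra h
      push_neg at h
      nlinarith [abs_nonneg (d i), sq_abs (d i)]
    rw [Real.dist_eq]
    have : y (N + m) i - y N i = -(d i) := by simp [hddef]
    rw [this, abs_neg]
    exact habs
  obtain ⟨z, hz⟩ := cauchySeq_tendsto_of_complete hyC
  have hmulcont : Continuous fun v : Fin n → ℝ => S *ᵥ v :=
    continuous_const.matrix_mulVec continuous_id
  have hSz : S *ᵥ z = z := by
    have h1 : Tendsto (fun ℓ => y (ℓ + 1)) atTop (nhds z) :=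
      hz.comp (tendsto_add_atTop_nat 1)
    have h2 : Tendsto (fun ℓ => S *ᵥ y ℓ) atTop (nhds (S *ᵥ z)) :=
      (hmulcont.tendsto z).comp hz
    have h3 : (fun ℓ => S *ᵥ y ℓ) = fun ℓ => y (ℓ + 1) := funext hyS
    rw [h3] at h2
    exact tendsto_nhds_unique h2 h1
  have hz0 : z = 0 := by
    set u := R⁻¹ *ᵥ z with hudef
    have hRu : R *ᵥ u = z := by rw [hudef, mulVec_mulVec, hRRinv, one_mulVec]
    have hMu : M *ᵥ u = W *ᵥ u := by
      have h1 : R⁻¹ *ᵥ (M *ᵥ u) = z := by rw [← hSmv, hSz]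
      have h2 : R *ᵥ (R⁻¹ *ᵥ (M *ᵥ u)) = M *ᵥ u := by
        rw [mulVec_mulVec, hRRinv, one_mulVec]
      rw [h1, ← hRu, mulVec_mulVec, hRR] at h2
      exact h2.symm
    have hKu : K *ᵥ u = 0 := by
      have h1 : M *ᵥ u = M *ᵥ u + Δt • (K *ᵥ u) := hMu.trans (hWmv u)
      have h2 : Δt • (K *ᵥ u) = 0 := add_eq_left.mp h1.symm
      rcases smul_eq_zero.mp h2 with h | h
      · exact absurd h (ne_of_gt ht)
      · exact h
    have hMu0 : M *ᵥ u = 0 := by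
      by_contra h
      have := hker u h
      rw [hKu, dotProduct_zero] at this
      exact lt_irrefl 0 this
    have hu0 : u = 0 := by
      by_contra h
      have hpos := hW.dotProduct_mulVec_pos h
      have : W *ᵥ u = 0 := by rw [hWmv, hMu0, hKu, smul_zero, add_zero]
      rw [this, dotProduct_zero] at hpos
      exact lt_irrefl 0 hpos
    rw [← hRu, hu0, mulVec_zero]
  have hqcont : Continuous fun v : Fin n → ℝ => v ⬝ᵥ S *ᵥ v :=
    continuous_id.dotProduct hmulcont
  have hfin : Tendsto (fun ℓ => y ℓ ⬝ᵥ S *ᵥ y ℓ) atTop (nhds (z ⬝ᵥ S *ᵥ z)) :=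
    (hqcont.tendsto z).comp hz
  have heq : (fun ℓ => e ℓ ⬝ᵥ M *ᵥ e ℓ) = fun ℓ => y ℓ ⬝ᵥ S *ᵥ y ℓ := funext hp_eq
  rw [heq]
  have hzero : z ⬝ᵥ S *ᵥ z = 0 := by rw [hz0]; simp
  rwa [hzero] at hfin
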